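/- For every w ∈ H¹(ℝ), the function x ↦ w(x) - iz ∫_{+∞}^{x} e^{-iz(x-y)} w(y) dy satisfies sup_{x∈ℝ} ‖w(x) - iz ∫_{+∞}^{x} e^{-iz(x-y)} w(y) dy‖_{L²_z(ℝ)} ≤ √(2π) ‖w'‖_{L²(ℝ)}. -/

import Mathlib

open MeasureTheory Filter Complex Real

noncomputable def gker (ε t : ℝ) : ℝ := Real.sqrt (Real.pi/ε) * Real.exp (-(t^2)/(4*ε))

lemma gker_nonneg {ε : ℝ} (t : ℝ) : 0 ≤ gker ε t := by
  unfold gker; positivity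

lemma gker_cont {ε : ℝ} : Continuous (gker ε) := by
  unfold gker
  exact continuous_const.mul (Real.continuous_exp.comp (by continuity))

lemma gker_le {ε : ℝ} (hε : 0 < ε) (t : ℝ) : gker ε t ≤ Real.sqrt (Real.pi/ε) := by
  unfold gker
  have h1 : Real.exp (-(t^2)/(4*ε)) ≤ 1 := Real.exp_le_one_iff.mpr (div_nonpos_of_nonpos_of_nonneg (by nlinarith [sq_nonneg t]) (by nlinarith))
  nlinarith [Real.sqrt_nonneg (Real.pi/ε)]

lemma gker_integral {ε : ℝ} (hε : 0 < ε) : ∫ t : ℝ, gker ε t = 2 * Real.pi := by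
  unfold gker
  have h1 : ∀ t : ℝ, Real.sqrt (Real.pi/ε) * Real.exp (-(t^2)/(4*ε))
      = Real.sqrt (Real.pi/ε) * Real.exp (-(1/(4*ε)) * t^2) := by
    intro t; congr 2; field_simp
  simp_rw [h1]
  rw [MeasureTheory.integral_const_mul, integral_gaussian, ← Real.sqrt_mul (by positivity),
    show Real.pi/ε * (Real.pi / (1/(4*ε))) = (2*Real.pi)^2 by field_simp; ring]
  exact Real.sqrt_sq (by positivity)

lemma gker_integrable {ε : ℝ} (hε : 0 < ε) : Integrable (gker ε) := by
  unfold gker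
  have h1 : ∀ t : ℝ, Real.sqrt (Real.pi/ε) * Real.exp (-(t^2)/(4*ε))
      = Real.sqrt (Real.pi/ε) * Real.exp (-(1/(4*ε)) * t^2) := by
    intro t; congr 2; field_simp
  simp_rw [h1]
  exact (integrable_exp_neg_mul_sq (by positivity)).const_mul _

lemma gauss_ft {ε : ℝ} (hε : 0 < ε) (t : ℝ) :
    ∫ z : ℝ, cexp (-(ε:ℂ) * (z:ℂ)^2 + (Complex.I * (t:ℂ)) * (z:ℂ)) = (gker ε t : ℂ) := by
  have h := integral_cexp_quadratic (b := -(ε:ℂ)) (by simpa using hε) (Complex.I * t) 0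
  simp only [neg_neg, add_zero, zero_sub] at h
  rw [h]
  have h2 : ((Real.pi : ℂ)/(ε:ℂ)) ^ (1/2 : ℂ) = (Real.sqrt (Real.pi/ε) : ℂ) := by
    rw [Real.sqrt_eq_rpow, Complex.ofReal_cpow (by positivity)]
    push_cast
    norm_num
  have h3 : -((Complex.I * t)^2 / (4 * -(ε:ℂ))) = ((-(t^2)/(4*ε) : ℝ) : ℂ) := by
    push_cast
    rw [mul_pow, Complex.I_sq]
    have : (ε:ℂ) ≠ 0 := by exact_mod_cast hε.ne'
    field_simp
  rw [h3, h2]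
  unfold gker
  push_cast [Complex.ofReal_exp]
  ring

lemma nrm_exp (z y : ℝ) : ‖cexp (Complex.I * z * y)‖ = 1 := by
  rw [show Complex.I * (z:ℂ) * (y:ℂ) = ((z*y : ℝ):ℂ) * Complex.I by push_cast; ring]
  exact Complex.norm_exp_ofReal_mul_I _

lemma nrm_exp2 {ε : ℝ} (z : ℝ) : ‖cexp (-(ε:ℂ) * (z:ℂ)^2)‖ = Real.exp (-ε * z^2) := by
  rw [show -(ε:ℂ) * (z:ℂ)^2 = ((-ε*z^2 : ℝ):ℂ) by push_cast; ring]
  exact Complex.norm_exp_ofReal _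

lemma exp_ident (ε z y y' : ℝ) (u v : ℂ) :
    cexp (-(ε:ℂ)*(z:ℂ)^2) * ((cexp (Complex.I*z*y) * u) * (starRingEnd ℂ) (cexp (Complex.I*z*y') * v)) =
    (u * (starRingEnd ℂ) v) * cexp (-(ε:ℂ)*(z:ℂ)^2 + (Complex.I*((y - y' : ℝ):ℂ))*(z:ℂ)) := by
  rw [map_mul, ← Complex.exp_conj]
  rw [show (starRingEnd ℂ) (Complex.I*(z:ℂ)*(y':ℂ)) = -(Complex.I*z*y') by
    simp [map_mul, Complex.conj_I, Complex.conj_ofReal]]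
  rw [show -(ε:ℂ)*(z:ℂ)^2 + (Complex.I*((y - y' : ℝ):ℂ))*(z:ℂ)
      = (-(ε:ℂ)*(z:ℂ)^2 + Complex.I*z*y) + -(Complex.I*z*y') by push_cast; ring]
  rw [Complex.exp_add, Complex.exp_add]
  ring

lemma step_bound (f : ℝ → ℂ) (hfm : Measurable f) (hf2 : MemLp f 2 volume) (a b : ℝ) {ε : ℝ} (hε : 0 < ε) :
    ∫ z : ℝ, Real.exp (-ε * z^2) * ‖∫ y in Set.Ioc a b, cexp (Complex.I * z * y) * f y‖^2
      ≤ 2 * Real.pi * ∫ y : ℝ, ‖f y‖^2 := by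
  set ν := volume.restrict (Set.Ioc a b) with hν
  haveI : IsFiniteMeasure ν := ⟨by
    rw [hν, Measure.restrict_apply_univ]; exact measure_Ioc_lt_top⟩
  have hfi : Integrable f ν := ((hf2.restrict _).mono_exponent (by norm_num)).integrable le_rfl
  have hsq : Integrable (fun y => ‖f y‖^2) volume := (memLp_two_iff_integrable_sq_norm hf2.1).mp hf2
  have hsqr : Integrable (fun y => ‖f y‖^2) ν := hsq.restrict
  set G : ℝ → ℂ := fun z => ∫ y, cexp (Complex.I * z * y) * f y ∂ν with hG
  -- the complex-valued Gaussian-weighted integral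
  set J : ℂ := ∫ z : ℝ, cexp (-(ε:ℂ)*(z:ℂ)^2) * (G z * (starRingEnd ℂ) (G z)) with hJ
  have hpoint : ∀ z : ℝ, cexp (-(ε:ℂ)*(z:ℂ)^2) * (G z * (starRingEnd ℂ) (G z))
      = ((Real.exp (-ε*z^2) * ‖G z‖^2 : ℝ) : ℂ) := by
    intro z
    rw [Complex.mul_conj, Complex.normSq_eq_norm_sq,
      show -(ε:ℂ)*(z:ℂ)^2 = ((-ε*z^2 : ℝ):ℂ) by push_cast; ring, ← Complex.ofReal_exp]
    push_cast
    ring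
  have hJ1 : J = ((∫ z : ℝ, Real.exp (-ε*z^2) * ‖G z‖^2 : ℝ) : ℂ) := by
    rw [hJ]
    simp_rw [hpoint]
    exact integral_ofReal
  have hGG : ∀ z : ℝ, cexp (-(ε:ℂ)*(z:ℂ)^2) * (G z * (starRingEnd ℂ) (G z))
      = ∫ p, cexp (-(ε:ℂ)*(z:ℂ)^2) * ((cexp (Complex.I*z*p.1) * f p.1) *
          (starRingEnd ℂ) (cexp (Complex.I*z*p.2) * f p.2)) ∂(ν.prod ν) := by
    intro z
    simp only [hG]
    rw [← integral_conj, ← integral_prod_mul (μ := ν) (ν := ν) (f := fun y => cexp (Complex.I*z*y) * f y)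
      (g := fun y => (starRingEnd ℂ) (cexp (Complex.I*z*y) * f y)), integral_const_mul]
  have hmeasH : Measurable (fun q : ℝ × (ℝ × ℝ) => cexp (-(ε:ℂ)*(q.1:ℂ)^2) *
      ((cexp (Complex.I*q.1*q.2.1) * f q.2.1) * (starRingEnd ℂ) (cexp (Complex.I*q.1*q.2.2) * f q.2.2))) := by
    have h1 : Measurable (fun q : ℝ × (ℝ × ℝ) => cexp (Complex.I*q.1*q.2.2) * f q.2.2) :=
      (Complex.measurable_exp.comp (by fun_prop)).mul (hfm.comp (by fun_prop))
    exact (Complex.measurable_exp.comp (by fun_prop)).mul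
      (((Complex.measurable_exp.comp (by fun_prop)).mul (hfm.comp (by fun_prop))).mul
        (continuous_star.measurable.comp h1))
  have hswap : J = ∫ p, (∫ z : ℝ, cexp (-(ε:ℂ)*(z:ℂ)^2) * ((cexp (Complex.I*z*p.1) * f p.1) *
      (starRingEnd ℂ) (cexp (Complex.I*z*p.2) * f p.2))) ∂(ν.prod ν) := by
    rw [hJ]
    simp_rw [hGG]
    refine integral_integral_swap ?_
    have hb : Integrable (fun q : ℝ × (ℝ × ℝ) => Real.exp (-ε*q.1^2) * (‖f q.2.1‖ * ‖f q.2.2‖))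
        (volume.prod (ν.prod ν)) :=
      (integrable_exp_neg_mul_sq hε).mul_prod (hfi.norm.mul_prod hfi.norm)
    refine hb.mono' hmeasH.aestronglyMeasurable ?_
    filter_upwards with q
    obtain ⟨z, p⟩ := q
    simp only [Function.uncurry_apply_pair]
    rw [norm_mul, norm_mul, norm_mul, RCLike.norm_conj, norm_mul, nrm_exp2, nrm_exp, nrm_exp]
    simp only [one_mul]
    exact le_of_eq (by ring)
  have hinner : ∀ p : ℝ × ℝ, (∫ z : ℝ, cexp (-(ε:ℂ)*(z:ℂ)^2) * ((cexp (Complex.I*z*p.1) * f p.1) *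
      (starRingEnd ℂ) (cexp (Complex.I*z*p.2) * f p.2)))
      = f p.1 * (starRingEnd ℂ) (f p.2) * (gker ε (p.1 - p.2) : ℂ) := by
    intro p
    simp_rw [exp_ident]
    rw [integral_const_mul, gauss_ft hε]
  have hJ2 : J = ∫ p, f p.1 * (starRingEnd ℂ) (f p.2) * (gker ε (p.1 - p.2) : ℂ) ∂(ν.prod ν) := by
    rw [hswap]
    exact integral_congr_ae (Filter.Eventually.of_forall hinner)
  -- integrability of bounding functions on the product
  have hI1 : Integrable (fun p : ℝ × ℝ => ‖f p.1‖^2 * gker ε (p.1 - p.2)) (ν.prod ν) := by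
    have hb : Integrable (fun p : ℝ × ℝ => Real.sqrt (Real.pi/ε) * (‖f p.1‖^2 * 1)) (ν.prod ν) :=
      ((hsqr.mul_prod (integrable_const 1))).const_mul _
    refine hb.mono' ?_ ?_
    · exact (((hfm.norm.pow_const 2).comp measurable_fst).mul
        (gker_cont.measurable.comp (measurable_fst.sub measurable_snd))).aestronglyMeasurable
    · filter_upwards with p
      rw [_root_.Real.norm_eq_abs, _root_.abs_of_nonneg (mul_nonneg (by positivity) (gker_nonneg _))]
      calc ‖f p.1‖^2 * gker ε (p.1 - p.2) ≤ ‖f p.1‖^2 * Real.sqrt (Real.pi/ε) := by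
            gcongr; exact gker_le hε _
        _ = Real.sqrt (Real.pi/ε) * (‖f p.1‖^2 * 1) := by ring
  have hI2 : Integrable (fun p : ℝ × ℝ => ‖f p.2‖^2 * gker ε (p.1 - p.2)) (ν.prod ν) := by
    have hb : Integrable (fun p : ℝ × ℝ => Real.sqrt (Real.pi/ε) * (1 * ‖f p.2‖^2)) (ν.prod ν) :=
      (((integrable_const 1).mul_prod hsqr)).const_mul _
    refine hb.mono' ?_ ?_
    · exact (((hfm.norm.pow_const 2).comp measurable_snd).mul
        (gker_cont.measurable.comp (measurable_fst.sub measurable_snd))).aestronglyMeasurable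
    · filter_upwards with p
      rw [_root_.Real.norm_eq_abs, _root_.abs_of_nonneg (mul_nonneg (by positivity) (gker_nonneg _))]
      calc ‖f p.2‖^2 * gker ε (p.1 - p.2) ≤ ‖f p.2‖^2 * Real.sqrt (Real.pi/ε) := by
            gcongr; exact gker_le hε _
        _ = Real.sqrt (Real.pi/ε) * (1 * ‖f p.2‖^2) := by ring
  -- term bounds
  have hterm1 : ∫ p, ‖f p.1‖^2 * gker ε (p.1 - p.2) ∂(ν.prod ν) ≤ (∫ y : ℝ, ‖f y‖^2) * (2*Real.pi) := by
    rw [integral_prod _ hI1]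
    have inner_le : ∀ y : ℝ, (∫ y', ‖f y‖^2 * gker ε (y - y') ∂ν) ≤ ‖f y‖^2 * (2*Real.pi) := by
      intro y
      rw [integral_const_mul]
      refine mul_le_mul_of_nonneg_left ?_ (by positivity)
      calc ∫ y', gker ε (y - y') ∂ν ≤ ∫ y' : ℝ, gker ε (y - y') :=
            setIntegral_le_integral ((gker_integrable hε).comp_sub_left y)
              (Filter.Eventually.of_forall fun y' => gker_nonneg _)
        _ = ∫ t : ℝ, gker ε t := integral_sub_left_eq_self (gker ε) volume y
        _ = 2*Real.pi := gker_integral hε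
    calc ∫ y, (∫ y', ‖f y‖^2 * gker ε (y - y') ∂ν) ∂ν
        ≤ ∫ y, ‖f y‖^2 * (2*Real.pi) ∂ν := by
          refine integral_mono_of_nonneg ?_ (hsqr.mul_const _) (Filter.Eventually.of_forall inner_le)
          filter_upwards with y
          exact integral_nonneg fun y' => mul_nonneg (by positivity) (gker_nonneg _)
      _ = (∫ y, ‖f y‖^2 ∂ν) * (2*Real.pi) := integral_mul_const _ _
      _ ≤ (∫ y : ℝ, ‖f y‖^2) * (2*Real.pi) :=
          mul_le_mul_of_nonneg_right
            (setIntegral_le_integral hsq (Filter.Eventually.of_forall fun y => by positivity))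
            (by positivity)
  have hterm2 : ∫ p, ‖f p.2‖^2 * gker ε (p.1 - p.2) ∂(ν.prod ν) ≤ (∫ y : ℝ, ‖f y‖^2) * (2*Real.pi) := by
    rw [integral_prod_symm _ hI2]
    have inner_le : ∀ y' : ℝ, (∫ y, ‖f y'‖^2 * gker ε (y - y') ∂ν) ≤ ‖f y'‖^2 * (2*Real.pi) := by
      intro y'
      rw [integral_const_mul]
      refine mul_le_mul_of_nonneg_left ?_ (by positivity)
      calc ∫ y, gker ε (y - y') ∂ν ≤ ∫ y : ℝ, gker ε (y - y') :=
            setIntegral_le_integral ((gker_integrable hε).comp_sub_right y')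
              (Filter.Eventually.of_forall fun y => gker_nonneg _)
        _ = ∫ t : ℝ, gker ε t := integral_sub_right_eq_self (gker ε) y'
        _ = 2*Real.pi := gker_integral hε
    calc ∫ y', (∫ y, ‖f y'‖^2 * gker ε (y - y') ∂ν) ∂ν
        ≤ ∫ y', ‖f y'‖^2 * (2*Real.pi) ∂ν := by
          refine integral_mono_of_nonneg ?_ (hsqr.mul_const _) (Filter.Eventually.of_forall inner_le)
          filter_upwards with y'
          exact integral_nonneg fun y => mul_nonneg (by positivity) (gker_nonneg _)
      _ = (∫ y, ‖f y‖^2 ∂ν) * (2*Real.pi) := integral_mul_const _ _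
      _ ≤ (∫ y : ℝ, ‖f y‖^2) * (2*Real.pi) :=
          mul_le_mul_of_nonneg_right
            (setIntegral_le_integral hsq (Filter.Eventually.of_forall fun y => by positivity))
            (by positivity)
  -- put it together
  have habs : ‖J‖ ≤ ∫ p, ‖f p.1‖^2 * gker ε (p.1 - p.2) / 2 + ‖f p.2‖^2 * gker ε (p.1 - p.2) / 2 ∂(ν.prod ν) := by
    rw [hJ2]
    refine le_trans (norm_integral_le_integral_norm _) ?_
    refine integral_mono_of_nonneg (Filter.Eventually.of_forall fun p => norm_nonneg _)
      ((hI1.div_const 2).add (hI2.div_const 2)) (Filter.Eventually.of_forall fun p => ?_)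
    dsimp only
    rw [norm_mul, norm_mul, RCLike.norm_conj, Complex.norm_real, _root_.Real.norm_eq_abs,
      _root_.abs_of_nonneg (gker_nonneg _)]
    nlinarith [sq_nonneg (‖f p.1‖ - ‖f p.2‖), gker_nonneg (ε := ε) (p.1 - p.2),
      norm_nonneg (f p.1), norm_nonneg (f p.2), mul_nonneg (mul_nonneg (norm_nonneg (f p.1)) (norm_nonneg (f p.2))) (gker_nonneg (ε := ε) (p.1 - p.2))]
  have hsum : ∫ p, ‖f p.1‖^2 * gker ε (p.1 - p.2) / 2 + ‖f p.2‖^2 * gker ε (p.1 - p.2) / 2 ∂(ν.prod ν)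
      ≤ 2 * Real.pi * ∫ y : ℝ, ‖f y‖^2 := by
    rw [integral_add (hI1.div_const 2) (hI2.div_const 2), integral_div, integral_div]
    have h2 := hterm1
    have h3 := hterm2
    nlinarith [hterm1, hterm2]
  have hle : ∫ z : ℝ, Real.exp (-ε * z^2) * ‖G z‖^2 ≤ ‖J‖ := by
    calc ∫ z : ℝ, Real.exp (-ε * z^2) * ‖G z‖^2 ≤ |∫ z : ℝ, Real.exp (-ε * z^2) * ‖G z‖^2| :=
          le_abs_self _
      _ = ‖J‖ := by rw [hJ1, Complex.norm_real, _root_.Real.norm_eq_abs]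
  exact le_trans hle (le_trans habs hsum)

lemma trunc_bound (f : ℝ → ℂ) (hfm : Measurable f) (hf2 : MemLp f 2 volume) (a b : ℝ) :
    ∫⁻ z : ℝ, ENNReal.ofReal (‖∫ y in Set.Ioc a b, cexp (Complex.I * z * y) * f y‖^2)
      ≤ ENNReal.ofReal (2 * Real.pi * ∫ y : ℝ, ‖f y‖^2) := by
  set ν := volume.restrict (Set.Ioc a b) with hν
  haveI : IsFiniteMeasure ν := ⟨by
    rw [hν, Measure.restrict_apply_univ]; exact measure_Ioc_lt_top⟩
  have hfi : Integrable f ν := ((hf2.restrict _).mono_exponent (by norm_num)).integrable le_rfl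
  set G : ℝ → ℂ := fun z => ∫ y, cexp (Complex.I * z * y) * f y ∂ν with hG
  have hEq : ∀ z : ℝ, (∫ y in Set.Ioc a b, cexp (Complex.I * z * y) * f y) = G z := fun z => rfl
  have hGcont : Continuous G := by
    rw [hG]
    refine continuous_of_dominated (bound := fun y => ‖f y‖) ?_ ?_ hfi.norm ?_
    · intro z; exact ((Complex.measurable_exp.comp (by fun_prop)).mul hfm).aestronglyMeasurable
    · intro z; filter_upwards with y; simp only [norm_mul, nrm_exp, one_mul]; exact le_rfl
    · filter_upwards with y
      exact (Complex.continuous_exp.comp ((continuous_const.mul Complex.continuous_ofReal).mul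
        continuous_const)).mul continuous_const
  have hGb : ∀ z, ‖G z‖ ≤ ∫ y, ‖f y‖ ∂ν := by
    intro z
    refine le_trans (norm_integral_le_integral_norm _) (le_of_eq ?_)
    refine integral_congr_ae (Filter.Eventually.of_forall fun y => ?_)
    simp only [norm_mul, nrm_exp, one_mul]
  have hint : ∀ ε : ℝ, 0 < ε → Integrable (fun z => Real.exp (-ε*z^2) * ‖G z‖^2) volume := by
    intro ε hε
    refine ((integrable_exp_neg_mul_sq hε).const_mul ((∫ y, ‖f y‖ ∂ν)^2)).mono'
      ((Real.continuous_exp.comp (continuous_const.mul (continuous_pow 2))).mul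
        (hGcont.norm.pow 2)).aestronglyMeasurable ?_
    filter_upwards with z
    rw [_root_.Real.norm_eq_abs, _root_.abs_of_nonneg (by positivity)]
    calc Real.exp (-ε*z^2) * ‖G z‖^2 ≤ Real.exp (-ε*z^2) * (∫ y, ‖f y‖ ∂ν)^2 :=
          mul_le_mul_of_nonneg_left (pow_le_pow_left₀ (norm_nonneg _) (hGb z) 2)
            (le_of_lt (Real.exp_pos _))
      _ = (∫ y, ‖f y‖ ∂ν)^2 * Real.exp (-ε*z^2) := by ring
  have hmono : ∀ z : ℝ, Monotone (fun n : ℕ => ENNReal.ofReal (Real.exp (-(1/((n:ℝ)+1))*z^2) * ‖G z‖^2)) := by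
    intro z m n hmn
    apply ENNReal.ofReal_le_ofReal
    apply mul_le_mul_of_nonneg_right _ (by positivity)
    apply Real.exp_le_exp.mpr
    have h0 : ((m:ℝ)+1) ≤ ((n:ℝ)+1) := by
      have := (Nat.cast_le (α := ℝ)).mpr hmn; linarith
    have h1 : (1:ℝ)/((n:ℝ)+1) ≤ 1/((m:ℝ)+1) := one_div_le_one_div_of_le (by positivity) h0
    nlinarith [sq_nonneg z]
  have hsup : ∀ z : ℝ, (⨆ n : ℕ, ENNReal.ofReal (Real.exp (-(1/((n:ℝ)+1))*z^2) * ‖G z‖^2))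
      = ENNReal.ofReal (‖G z‖^2) := by
    intro z
    refine tendsto_nhds_unique (tendsto_atTop_iSup (hmono z)) ?_
    have h1 : Filter.Tendsto (fun n : ℕ => -(1/((n:ℝ)+1))*z^2) Filter.atTop (nhds 0) := by
      have h2 := tendsto_one_div_add_atTop_nhds_zero_nat.neg.mul_const (z^2)
      simpa using h2
    have h2 : Filter.Tendsto (fun n : ℕ => Real.exp (-(1/((n:ℝ)+1))*z^2) * ‖G z‖^2)
        Filter.atTop (nhds (‖G z‖^2)) := by
      have h3 := (Real.continuous_exp.tendsto 0).comp h1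
      simpa using h3.mul_const (‖G z‖^2)
    exact (ENNReal.continuous_ofReal.tendsto _).comp h2
  calc ∫⁻ z, ENNReal.ofReal (‖G z‖^2)
      = ∫⁻ z, ⨆ n : ℕ, ENNReal.ofReal (Real.exp (-(1/((n:ℝ)+1))*z^2) * ‖G z‖^2) :=
        lintegral_congr fun z => (hsup z).symm
    _ = ⨆ n : ℕ, ∫⁻ z, ENNReal.ofReal (Real.exp (-(1/((n:ℝ)+1))*z^2) * ‖G z‖^2) := by
        refine lintegral_iSup' (fun n => ?_) (Filter.Eventually.of_forall hmono)
        exact (ENNReal.measurable_ofReal.comp ((Real.measurable_exp.comp ((measurable_const.mul (measurable_id.pow_const 2)) : Measurable fun z : ℝ => -(1/((n:ℝ)+1))*z^2)).mul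
          ((hGcont.norm.pow 2).measurable))).aemeasurable
    _ ≤ ENNReal.ofReal (2 * Real.pi * ∫ y : ℝ, ‖f y‖^2) := by
        refine iSup_le fun n => ?_
        rw [← ofReal_integral_eq_lintegral_ofReal (hint _ (by positivity))
          (Filter.Eventually.of_forall fun z => by positivity)]
        exact ENNReal.ofReal_le_ofReal (step_bound f hfm hf2 a b (by positivity))

lemma limit_zero_of_integrable {g : ℝ → ℝ} {c : ℝ} (hg : Integrable g volume)
    (hnn : ∀ y, 0 ≤ g y) (hc : Filter.Tendsto g Filter.atTop (nhds c)) : c = 0 := by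
  by_contra hc0
  have hcpos : 0 < c := by
    rcases lt_or_gt_of_ne hc0 with h | h
    · exact absurd (ge_of_tendsto hc (Filter.Eventually.of_forall hnn)) (by linarith)
    · exact h
  have hev : ∀ᶠ y in Filter.atTop, c/2 ≤ g y :=
    hc.eventually (eventually_ge_nhds (by linarith))
  obtain ⟨B, hB⟩ := hev.exists_forall_of_atTop
  have hconst : Integrable (fun _ : ℝ => c/2) (volume.restrict (Set.Ioi B)) := by
    refine (hg.integrableOn (s := Set.Ioi B)).mono' aestronglyMeasurable_const ?_
    rw [ae_restrict_iff' measurableSet_Ioi]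
    filter_upwards with y hy
    rw [_root_.Real.norm_eq_abs, _root_.abs_of_nonneg (by linarith)]
    exact hB y (le_of_lt hy)
  rcases (integrable_const_iff).mp hconst with h | h
  · exact hc0 (by linarith [h])
  · have h' := h.measure_univ_lt_top
    rw [Measure.restrict_apply_univ, Real.volume_Ioi] at h'
    exact absurd h' (by simp)

lemma norm_sq_complex (u : ℂ) : ‖u‖^2 = u.re*u.re + u.im*u.im := by
  rw [Complex.sq_norm, Complex.normSq_apply]

lemma tendsto_w_zero (w w' : ℝ → ℂ) (hw : MemLp w 2 volume) (hw' : MemLp w' 2 volume)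
    (hderiv : ∀ x : ℝ, HasDerivAt w (w' x) x) :
    Filter.Tendsto w Filter.atTop (nhds 0) := by
  have hwc : Continuous w := by
    rw [continuous_iff_continuousAt]; exact fun y => (hderiv y).continuousAt
  have hw'm : Measurable w' := by
    have h : w' = deriv w := funext fun y => ((hderiv y).deriv).symm
    rw [h]; exact measurable_deriv w
  have hwsq : Integrable (fun y => ‖w y‖^2) volume := (memLp_two_iff_integrable_sq_norm hw.1).mp hw
  have hw'sq : Integrable (fun y => ‖w' y‖^2) volume := (memLp_two_iff_integrable_sq_norm hw'.1).mp hw'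
  -- derivative of ‖w‖²
  set D : ℝ → ℝ := fun y => ((w' y).re*(w y).re + (w y).re*(w' y).re) +
      ((w' y).im*(w y).im + (w y).im*(w' y).im) with hD
  have hre : ∀ y, HasDerivAt (fun t => (w t).re) ((w' y).re) y := fun y =>
    (Complex.reCLM.hasFDerivAt.comp_hasDerivAt y (hderiv y) : )
  have him : ∀ y, HasDerivAt (fun t => (w t).im) ((w' y).im) y := fun y =>
    (Complex.imCLM.hasFDerivAt.comp_hasDerivAt y (hderiv y) : )
  have hm : ∀ y, HasDerivAt (fun t => ‖w t‖^2) (D y) y := by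
    intro y
    have h1 := (((hre y).mul (hre y)).add ((him y).mul (him y)))
    have h2 : (fun t => (w t).re * (w t).re + (w t).im * (w t).im) = fun t => ‖w t‖^2 :=
      funext fun t => (norm_sq_complex (w t)).symm
    rw [← h2]
    exact h1
  have hDint : Integrable D volume := by
    have hb : Integrable (fun y => 2*(‖w y‖^2 + ‖w' y‖^2)) volume := (hwsq.add hw'sq).const_mul 2
    refine hb.mono' ?_ ?_
    · refine StronglyMeasurable.aestronglyMeasurable ?_
      have h1 : Measurable D := by
        have hwm : Measurable w := hwc.measurable
        fun_prop
      exact h1.stronglyMeasurable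
    · filter_upwards with y
      rw [_root_.Real.norm_eq_abs]
      have h1 : |(w y).re| ≤ ‖w y‖ := Complex.abs_re_le_norm _
      have h2 : |(w y).im| ≤ ‖w y‖ := Complex.abs_im_le_norm _
      have h3 : |(w' y).re| ≤ ‖w' y‖ := Complex.abs_re_le_norm _
      have h4 : |(w' y).im| ≤ ‖w' y‖ := Complex.abs_im_le_norm _
      have h5 : |D y| ≤ 4 * (‖w y‖ * ‖w' y‖) := by
        rw [hD]
        calc |((w' y).re*(w y).re + (w y).re*(w' y).re) + ((w' y).im*(w y).im + (w y).im*(w' y).im)|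
            ≤ |(w' y).re*(w y).re| + |(w y).re*(w' y).re| + (|(w' y).im*(w y).im| + |(w y).im*(w' y).im|) := by
              refine le_trans (abs_add_le _ _) ?_
              gcongr <;> exact abs_add_le _ _
          _ ≤ ‖w' y‖*‖w y‖ + ‖w y‖*‖w' y‖ + (‖w' y‖*‖w y‖ + ‖w y‖*‖w' y‖) := by
              rw [abs_mul, abs_mul, abs_mul, abs_mul]
              gcongr
          _ = 4 * (‖w y‖ * ‖w' y‖) := by ring
      calc |D y| ≤ 4 * (‖w y‖ * ‖w' y‖) := h5
        _ ≤ 2*(‖w y‖^2 + ‖w' y‖^2) := by nlinarith [sq_nonneg (‖w y‖ - ‖w' y‖), norm_nonneg (w y), norm_nonneg (w' y)]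
  have hFTC : ∀ b : ℝ, ‖w b‖^2 = ‖w 0‖^2 + ∫ y in (0:ℝ)..b, D y := by
    intro b
    rw [intervalIntegral.integral_eq_sub_of_hasDerivAt (fun y _ => hm y)
      hDint.intervalIntegrable]
    ring
  have htendI : Filter.Tendsto (fun b : ℝ => ∫ y in (0:ℝ)..b, D y) Filter.atTop
      (nhds (∫ y in Set.Ioi (0:ℝ), D y)) :=
    intervalIntegral_tendsto_integral_Ioi 0 hDint.integrableOn Filter.tendsto_id
  have htendm : Filter.Tendsto (fun b => ‖w b‖^2) Filter.atTop
      (nhds (‖w 0‖^2 + ∫ y in Set.Ioi (0:ℝ), D y)) := by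
    have h1 := htendI.const_add (‖w 0‖^2)
    refine h1.congr fun b => (hFTC b).symm
  have hc0 : ‖w 0‖^2 + ∫ y in Set.Ioi (0:ℝ), D y = 0 :=
    limit_zero_of_integrable hwsq (fun y => by positivity) htendm
  rw [hc0] at htendm
  have hn : Filter.Tendsto (fun b => ‖w b‖) Filter.atTop (nhds 0) := by
    have h1 := (Real.continuous_sqrt.tendsto 0).comp htendm
    simp only [Real.sqrt_zero, Function.comp] at h1
    refine h1.congr fun b => ?_
    simp [Real.sqrt_sq_eq_abs]
  exact tendsto_zero_iff_norm_tendsto_zero.mpr hn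

lemma L2_integrableOn_Ioc {f : ℝ → ℂ} (hf2 : MemLp f 2 volume) (a b : ℝ) :
    IntegrableOn f (Set.Ioc a b) volume := by
  haveI : IsFiniteMeasure (volume.restrict (Set.Ioc a b)) := ⟨by
    rw [Measure.restrict_apply_univ]; exact measure_Ioc_lt_top⟩
  exact ((hf2.restrict _).mono_exponent (by norm_num)).integrable le_rfl

lemma ibp_tendsto (w w' : ℝ → ℂ) (hw : MemLp w 2 volume) (hw' : MemLp w' 2 volume)
    (hderiv : ∀ x : ℝ, HasDerivAt w (w' x) x) (x z : ℝ)
    (hwx : IntegrableOn w (Set.Ioi x) volume) :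
    Filter.Tendsto (fun n : ℕ => ∫ y in Set.Ioc x (x + (n:ℝ)), cexp (Complex.I*z*y) * w' y)
      Filter.atTop
      (nhds (-(cexp (Complex.I*z*x) * (w x - Complex.I * z *
        (-(∫ y in Set.Ioi x, cexp (-Complex.I * z * ((x:ℂ) - (y:ℂ))) * w y)))))) := by
  have hwc : Continuous w := by
    rw [continuous_iff_continuousAt]; exact fun y => (hderiv y).continuousAt
  have hwzero := tendsto_w_zero w w' hw hw' hderiv
  -- derivative of the product
  have hphi : ∀ y : ℝ, HasDerivAt (fun t : ℝ => cexp (Complex.I*z*t) * w t)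
      (Complex.I*z*(cexp (Complex.I*z*y) * w y) + cexp (Complex.I*z*y) * w' y) y := by
    intro y
    have h0 : HasDerivAt (fun t : ℝ => ((t:ℝ):ℂ)) 1 y := by
      simpa using (hasDerivAt_id y).ofReal_comp
    have h1 : HasDerivAt (fun t : ℝ => Complex.I*z*(t:ℂ)) (Complex.I*z) y := by
      simpa using h0.const_mul (Complex.I*(z:ℂ))
    have h3 := (h1.cexp).mul (hderiv y)
    rw [show Complex.I*z*(cexp (Complex.I*z*y) * w y) + cexp (Complex.I*z*y) * w' y
      = cexp (Complex.I*z*y) * (Complex.I*z) * w y + cexp (Complex.I*z*y) * w' y by ring]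
    exact h3
  -- interval integrabilities
  have hII1 : ∀ b : ℝ, IntervalIntegrable (fun y : ℝ => Complex.I*z*(cexp (Complex.I*z*y) * w y)) volume x b := by
    intro b
    exact (continuous_const.mul ((Complex.continuous_exp.comp
      ((continuous_const.mul Complex.continuous_ofReal))).mul hwc)).intervalIntegrable x b
  have hII2 : ∀ b : ℝ, IntervalIntegrable (fun y : ℝ => cexp (Complex.I*z*y) * w' y) volume x b := by
    intro b
    rw [intervalIntegrable_iff]
    have hw'loc : IntegrableOn w' (Set.uIoc x b) volume := by
      rw [Set.uIoc]
      exact L2_integrableOn_Ioc hw' _ _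
    refine Integrable.bdd_mul hw'loc ?_ (ae_of_all _ fun y => le_of_eq (nrm_exp z y))
    exact ((Complex.continuous_exp.comp (continuous_const.mul
      Complex.continuous_ofReal))).aestronglyMeasurable
  have hFTC : ∀ n : ℕ, ∫ y in x..(x+(n:ℝ)),
      (Complex.I*z*(cexp (Complex.I*z*y) * w y) + cexp (Complex.I*z*y) * w' y)
      = cexp (Complex.I*z*((x+(n:ℝ) : ℝ):ℂ)) * w (x+(n:ℝ)) - cexp (Complex.I*z*x) * w x := by
    intro n
    exact intervalIntegral.integral_eq_sub_of_hasDerivAt (fun y _ => hphi y)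
      ((hII1 _).add (hII2 _))
  have hsplit : ∀ n : ℕ, ∫ y in x..(x+(n:ℝ)), cexp (Complex.I*z*y) * w' y
      = (cexp (Complex.I*z*((x+(n:ℝ) : ℝ):ℂ)) * w (x+(n:ℝ)) - cexp (Complex.I*z*x) * w x)
        - Complex.I*z*(∫ y in x..(x+(n:ℝ)), cexp (Complex.I*z*y) * w y) := by
    intro n
    have h1 := hFTC n
    rw [intervalIntegral.integral_add (hII1 _) (hII2 _),
      intervalIntegral.integral_const_mul] at h1
    linear_combination h1
  -- limits
  have hb : Filter.Tendsto (fun n : ℕ => x + (n:ℝ)) Filter.atTop Filter.atTop :=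
    tendsto_atTop_add_const_left _ x tendsto_natCast_atTop_atTop
  have hA : Filter.Tendsto (fun n : ℕ => cexp (Complex.I*z*((x+(n:ℝ) : ℝ):ℂ)) * w (x+(n:ℝ)))
      Filter.atTop (nhds 0) := by
    have h1 : Filter.Tendsto (fun n : ℕ => ‖w (x+(n:ℝ))‖) Filter.atTop (nhds 0) := by
      have h2 := (hwzero.comp hb).norm
      simpa using h2
    refine squeeze_zero_norm (fun n => ?_) h1
    rw [norm_mul, nrm_exp, one_mul]
  have hIntIoi : IntegrableOn (fun y : ℝ => cexp (Complex.I*z*y) * w y) (Set.Ioi x) volume := by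
    refine Integrable.bdd_mul hwx ?_ (ae_of_all _ fun y => le_of_eq (nrm_exp z y))
    exact ((Complex.continuous_exp.comp (continuous_const.mul
      Complex.continuous_ofReal))).aestronglyMeasurable
  have hB : Filter.Tendsto (fun n : ℕ => ∫ y in x..(x+(n:ℝ)), cexp (Complex.I*z*y) * w y)
      Filter.atTop (nhds (∫ y in Set.Ioi x, cexp (Complex.I*z*y) * w y)) :=
    intervalIntegral_tendsto_integral_Ioi x hIntIoi hb
  -- identify the limit value
  set S : ℂ := ∫ y in Set.Ioi x, cexp (Complex.I*z*y) * w y with hS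
  have hcomb : Filter.Tendsto (fun n : ℕ => ∫ y in x..(x+(n:ℝ)), cexp (Complex.I*z*y) * w' y)
      Filter.atTop (nhds ((0 - cexp (Complex.I*z*x) * w x) - Complex.I*z*S)) := by
    have h1 := (hA.sub_const (cexp (Complex.I*z*x) * w x)).sub (hB.const_mul (Complex.I*(z:ℂ)))
    refine Filter.Tendsto.congr (fun n => (hsplit n).symm) h1
  have hexp2 : ∀ y : ℝ, cexp (-Complex.I * z * ((x:ℂ)-(y:ℂ))) * w y
      = cexp (-(Complex.I*z*x)) * (cexp (Complex.I*z*y) * w y) := by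
    intro y
    rw [← mul_assoc, ← Complex.exp_add]
    congr 2
    ring
  have hSS : (∫ y in Set.Ioi x, cexp (-Complex.I * z * ((x:ℂ)-(y:ℂ))) * w y)
      = cexp (-(Complex.I*z*x)) * S := by
    rw [hS]
    simp_rw [hexp2]
    exact MeasureTheory.integral_const_mul _ _
  have hcc : cexp (Complex.I*z*x) * cexp (-(Complex.I*z*x)) = 1 := by
    rw [← Complex.exp_add]; simp
  have hTeq : (0 - cexp (Complex.I*z*x) * w x) - Complex.I*z*S
      = -(cexp (Complex.I*z*x) * (w x - Complex.I * z *
        (-(∫ y in Set.Ioi x, cexp (-Complex.I * z * ((x:ℂ) - (y:ℂ))) * w y)))) := by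
    rw [hSS]
    linear_combination (Complex.I*(z:ℂ)*S) * hcc
  rw [← hTeq]
  refine Filter.Tendsto.congr (fun n => ?_) hcomb
  rw [intervalIntegral.integral_of_le (le_add_of_nonneg_right (Nat.cast_nonneg n))]

lemma nrm_exp3 (z x y : ℝ) : ‖cexp (-Complex.I*z*((x:ℂ)-(y:ℂ)))‖ = 1 := by
  rw [show -Complex.I*(z:ℂ)*((x:ℂ)-(y:ℂ)) = ((z*(y-x) : ℝ):ℂ)*Complex.I by push_cast; ring]
  exact Complex.norm_exp_ofReal_mul_I _

lemma G_cont (f : ℝ → ℂ) (hfm : Measurable f) (hf2 : MemLp f 2 volume) (a b : ℝ) :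
    Continuous (fun z : ℝ => ∫ y in Set.Ioc a b, cexp (Complex.I * z * y) * f y) := by
  have hfi : IntegrableOn f (Set.Ioc a b) volume := L2_integrableOn_Ioc hf2 a b
  refine continuous_of_dominated (bound := fun y => ‖f y‖) ?_ ?_ hfi.norm ?_
  · intro z; exact ((Complex.measurable_exp.comp (by fun_prop)).mul hfm).aestronglyMeasurable
  · intro z; filter_upwards with y; simp only [norm_mul, nrm_exp, one_mul]; exact le_rfl
  · filter_upwards with y
    exact (Complex.continuous_exp.comp ((continuous_const.mul Complex.continuous_ofReal).mul
      continuous_const)).mul continuous_const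

/-- For every `w ∈ H¹(ℝ)`,
`sup_{x∈ℝ} ‖w(x) - iz ∫_{+∞}^{x} e^{-iz(x-y)} w(y) dy‖_{L²_z(ℝ)} ≤ √(2π) ‖w'‖_{L²(ℝ)}`. -/
theorem stmt1 (w w' : ℝ → ℂ) (hw : MemLp w 2 volume) (hw' : MemLp w' 2 volume)
    (hderiv : ∀ x : ℝ, HasDerivAt w (w' x) x) :
    ∀ x : ℝ,
      Real.sqrt (∫ z : ℝ,
          ‖w x - Complex.I * (z : ℂ) *
              (-(∫ y in Set.Ioi x,
                  Complex.exp (-Complex.I * (z : ℂ) * ((x : ℂ) - (y : ℂ))) * w y))‖ ^ 2)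
        ≤ Real.sqrt (2 * Real.pi) * Real.sqrt (∫ y : ℝ, ‖w' y‖ ^ 2) := by
  intro x
  have hw'm : Measurable w' := by
    have h : w' = deriv w := funext fun y => ((hderiv y).deriv).symm
    rw [h]; exact measurable_deriv w
  have hwc : Continuous w := by
    rw [continuous_iff_continuousAt]; exact fun y => (hderiv y).continuousAt
  have hRHS : (0:ℝ) ≤ Real.sqrt (2 * Real.pi) * Real.sqrt (∫ y : ℝ, ‖w' y‖ ^ 2) := by positivity
  by_cases hwx : IntegrableOn w (Set.Ioi x) volume
  · -- main case
    set E : ℝ → ℂ := fun z : ℝ => w x - Complex.I * (z : ℂ) *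
        (-(∫ y in Set.Ioi x, Complex.exp (-Complex.I * (z : ℂ) * ((x : ℂ) - (y : ℂ))) * w y))
      with hE
    show Real.sqrt (∫ z : ℝ, ‖E z‖ ^ 2) ≤ _
    set Gn : ℕ → ℝ → ℂ := fun n z => ∫ y in Set.Ioc x (x+(n:ℝ)), cexp (Complex.I*z*y) * w' y
      with hGn
    have htend : ∀ z : ℝ, Filter.Tendsto (fun n => Gn n z) Filter.atTop
        (nhds (-(cexp (Complex.I*z*x) * E z))) := fun z =>
      ibp_tendsto w w' hw hw' hderiv x z hwx
    have hnorm_tend : ∀ z : ℝ, Filter.Tendsto (fun n => ‖Gn n z‖^2) Filter.atTop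
        (nhds (‖E z‖^2)) := by
      intro z
      have h1 := (htend z).norm
      rw [norm_neg, norm_mul, nrm_exp, one_mul] at h1
      exact h1.pow 2
    have hGnmeas : ∀ n : ℕ, Measurable (fun z => ‖Gn n z‖^2) := fun n =>
      ((G_cont w' hw'm hw' x (x+(n:ℝ))).norm.pow 2).measurable
    have hEmeas : AEStronglyMeasurable (fun z => ‖E z‖^2) volume :=
      aestronglyMeasurable_of_tendsto_ae Filter.atTop
        (fun n => (hGnmeas n).aestronglyMeasurable) (ae_of_all _ hnorm_tend)
    have hnn : 0 ≤ᵐ[volume] fun z => ‖E z‖^2 := ae_of_all _ fun z => by positivity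
    have hA : (0:ℝ) ≤ ∫ y : ℝ, ‖w' y‖^2 := integral_nonneg fun y => by positivity
    have hkey : ∫⁻ z : ℝ, ENNReal.ofReal (‖E z‖^2)
        ≤ ENNReal.ofReal (2*Real.pi * ∫ y : ℝ, ‖w' y‖^2) := by
      have h1 : ∀ z : ℝ, ENNReal.ofReal (‖E z‖^2)
          = Filter.liminf (fun n => ENNReal.ofReal (‖Gn n z‖^2)) Filter.atTop := fun z =>
        ((ENNReal.continuous_ofReal.tendsto _).comp (hnorm_tend z)).liminf_eq.symm
      calc ∫⁻ z : ℝ, ENNReal.ofReal (‖E z‖^2)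
          = ∫⁻ z : ℝ, Filter.liminf (fun n => ENNReal.ofReal (‖Gn n z‖^2)) Filter.atTop :=
            lintegral_congr h1
        _ ≤ Filter.liminf (fun n => ∫⁻ z : ℝ, ENNReal.ofReal (‖Gn n z‖^2)) Filter.atTop :=
            lintegral_liminf_le (fun n => ENNReal.measurable_ofReal.comp (hGnmeas n))
        _ ≤ Filter.liminf (fun _ : ℕ => ENNReal.ofReal (2*Real.pi * ∫ y : ℝ, ‖w' y‖^2))
              Filter.atTop := by
            refine Filter.liminf_le_liminf (Filter.Eventually.of_forall fun n => ?_)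
            exact trunc_bound w' hw'm hw' x (x+(n:ℝ))
        _ = ENNReal.ofReal (2*Real.pi * ∫ y : ℝ, ‖w' y‖^2) := Filter.liminf_const _
    have hle : ∫ z : ℝ, ‖E z‖^2 ≤ 2*Real.pi * ∫ y : ℝ, ‖w' y‖^2 := by
      rw [integral_eq_lintegral_of_nonneg_ae hnn hEmeas]
      calc (∫⁻ z : ℝ, ENNReal.ofReal (‖E z‖^2)).toReal
          ≤ (ENNReal.ofReal (2*Real.pi * ∫ y : ℝ, ‖w' y‖^2)).toReal :=
            ENNReal.toReal_mono ENNReal.ofReal_ne_top hkey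
        _ = 2*Real.pi * ∫ y : ℝ, ‖w' y‖^2 := ENNReal.toReal_ofReal (by positivity)
    calc Real.sqrt (∫ z : ℝ, ‖E z‖^2) ≤ Real.sqrt (2*Real.pi * ∫ y : ℝ, ‖w' y‖^2) :=
          Real.sqrt_le_sqrt hle
      _ = Real.sqrt (2*Real.pi) * Real.sqrt (∫ y : ℝ, ‖w' y‖^2) :=
          Real.sqrt_mul (by positivity) _
  · -- non-integrable case : inner integral vanishes
    have hzero : ∀ z : ℝ,
        (∫ y in Set.Ioi x, Complex.exp (-Complex.I * (z:ℂ) * ((x:ℂ)-(y:ℂ))) * w y) = 0 := by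
      intro z
      apply integral_undef
      intro hcon
      apply hwx
      have h1 : IntegrableOn (fun y => ‖w y‖) (Set.Ioi x) volume := by
        have h2 := hcon.norm
        refine h2.congr ?_
        filter_upwards with y
        rw [norm_mul, nrm_exp3, one_mul]
      exact (integrable_norm_iff (hwc.aestronglyMeasurable.restrict)).mp h1
    simp_rw [hzero]
    have hsimp : ∀ z : ℝ, ‖w x - Complex.I * (z:ℂ) * (-(0:ℂ))‖^2 = ‖w x‖^2 := by
      intro z; simp
    simp_rw [hsimp]
    rcases eq_or_ne (w x) 0 with h | h
    · simp only [h, norm_zero]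
      norm_num
      positivity
    · have hni : ¬ Integrable (fun _ : ℝ => ‖w x‖^2) volume := by
        rw [integrable_const_iff]
        push_neg
        constructor
        · exact pow_ne_zero 2 (norm_ne_zero_iff.mpr h)
        · exact fun hfin => absurd hfin.measure_univ_lt_top (by simp [Real.volume_univ])
      rw [integral_undef hni, Real.sqrt_zero]
      exact hRHS
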